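/- Let f be the function x ↦ x/(−log(1−x)) (extended by value 1 at x = 0) and let c_k(g) denote the k-th Taylor coefficient at 0 of an analytic function g. Then for every integer k ≥ 2, (k−1) · c_k(f^k) = −c_k(f^{k−1}). Equivalently, the Gregory polynomials satisfy k·G_k^{(k)} + G_k^{(k−1)} = 0. -/

import Mathlib

/-!
Write `A(x) = x / (-log (1 - x))` and `L(x) = -log (1 - x) / x = ∑ xⁿ / (n + 1)`, so that
`A L = 1` and `(1 - x) (x L)' = 1`. Differentiating `A L = 1` gives the Riccati-type equation
`x (1 - x) A' = (1 - x) A - A²`, hence `x (1 - x) (Aʲ)' = j ((1 - x) Aʲ - Aʲ⁺¹)`. Comparing the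
coefficients of `xʲ⁺¹` on both sides gives `j [xʲ⁺¹] Aʲ⁺¹ = -[xʲ⁺¹] Aʲ`. This is a computation
with formal power series; it transfers to Taylor coefficients because these are multiplicative
on smooth germs (Leibniz rule).
-/

/-- The `n`-th Taylor coefficient at `0` of a function `f : ℝ → ℝ`. -/
noncomputable def taylorCoeff (n : ℕ) (f : ℝ → ℝ) : ℝ :=
  iteratedDeriv n f 0 / n.factorial

/-- The function `x ↦ x / (−log (1 − x))`, extended by the value `1` at `x = 0`. -/
noncomputable def gregoryGenNeg (x : ℝ) : ℝ :=
  if x = 0 then 1 else x / (-Real.log (1 - x))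

open PowerSeries Filter
open scoped Topology ContDiff

namespace Gregory

theorem coeff_X_mul_derivative {R : Type*} [CommRing R] (B : R⟦X⟧) (n : ℕ) :
    coeff n (X * d⁄dX R B) = n * coeff n B := by
  cases n with
  | zero => simp
  | succ n => rw [coeff_succ_X_mul, coeff_derivative, mul_comm]; push_cast; rfl

theorem coeff_succ_one_sub_X_mul {R : Type*} [CommRing R] (B : R⟦X⟧) (n : ℕ) :
    coeff (n + 1) ((1 - X) * B) = coeff (n + 1) B - coeff n B := by
  rw [sub_mul, one_mul, map_sub, coeff_succ_X_mul]

section Formal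

noncomputable def negLogOneSubDivSeries (K : Type*) [Field K] : K⟦X⟧ :=
  mk fun n => ((n : K) + 1)⁻¹

variable {K : Type*} [Field K] [CharZero K]

theorem one_sub_X_mul_derivative_X_mul_negLogOneSubDivSeries :
    (1 - X) * d⁄dX K (X * negLogOneSubDivSeries K) = 1 := by
  have h : d⁄dX K (X * negLogOneSubDivSeries K) = mk 1 := by
    ext n
    rw [coeff_derivative, coeff_succ_X_mul, negLogOneSubDivSeries, coeff_mk, coeff_mk,
      Pi.one_apply]
    field_simp
  rw [h, mul_comm, mk_one_mul_one_sub_eq_one]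

variable {A : K⟦X⟧} (hA : A * negLogOneSubDivSeries K = 1)
include hA

theorem X_mul_one_sub_X_mul_derivative_of_mul_eq_one :
    X * (1 - X) * d⁄dX K A = (1 - X) * A - A ^ 2 := by
  have hL := one_sub_X_mul_derivative_X_mul_negLogOneSubDivSeries (K := K)
  rw [Derivation.leibniz, derivative_X, smul_eq_mul, smul_eq_mul, mul_one] at hL
  have hdA := congrArg (d⁄dX K) hA
  rw [Derivation.leibniz, Derivation.map_one_eq_zero, smul_eq_mul, smul_eq_mul] at hdA
  linear_combination (-X * (1 - X) * d⁄dX K A + (1 - X) * A) * hA + X * (1 - X) * A * hdA -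
    A ^ 2 * hL

theorem X_mul_one_sub_X_mul_derivative_pow_of_mul_eq_one (j : ℕ) :
    X * (1 - X) * d⁄dX K (A ^ j) = j • ((1 - X) * A ^ j - A ^ (j + 1)) := by
  cases j with
  | zero => simp
  | succ j =>
    rw [Derivation.leibniz_pow, Nat.add_sub_cancel, smul_eq_mul, nsmul_eq_mul, nsmul_eq_mul,
      Nat.cast_succ]
    linear_combination ((j + 1 : K⟦X⟧) * A ^ j) *
      X_mul_one_sub_X_mul_derivative_of_mul_eq_one hA

theorem natCast_mul_coeff_pow_succ_eq_neg_coeff_pow (n : ℕ) :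
    n * coeff (n + 1) (A ^ (n + 1)) = -coeff (n + 1) (A ^ n) := by
  have h := congrArg (coeff (n + 1)) (X_mul_one_sub_X_mul_derivative_pow_of_mul_eq_one hA n)
  rw [mul_comm X, mul_assoc, coeff_succ_one_sub_X_mul, coeff_X_mul_derivative,
    coeff_X_mul_derivative, map_nsmul, map_sub, coeff_succ_one_sub_X_mul, nsmul_eq_mul] at h
  push_cast at h
  linear_combination h

theorem sub_one_mul_coeff_pow_eq_neg_coeff_pow_sub_one (k : ℕ) :
    ((k : K) - 1) * coeff k (A ^ k) = -coeff k (A ^ (k - 1)) := by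
  cases k with
  | zero => simp
  | succ n => simpa using natCast_mul_coeff_pow_succ_eq_neg_coeff_pow hA n

end Formal

theorem taylorCoeff_eq_of_hasFPowerSeriesAt {f : ℝ → ℝ} {a : ℕ → ℝ}
    (hf : HasFPowerSeriesAt f (.ofScalars ℝ a) 0) (n : ℕ) : taylorCoeff n f = a n :=
  congrFun (FormalMultilinearSeries.ofScalars_series_injective ℝ ℝ
    (hf.analyticAt.hasFPowerSeriesAt.eq_formalMultilinearSeries hf)) n

noncomputable def taylorSeries (f : ℝ → ℝ) : ℝ⟦X⟧ :=
  mk fun n => taylorCoeff n f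

theorem taylorSeries_congr {f g : ℝ → ℝ} (h : f =ᶠ[𝓝 0] g) : taylorSeries f = taylorSeries g := by
  ext n
  simp only [taylorSeries, coeff_mk, taylorCoeff, h.iteratedDeriv_eq n]

@[simp]
theorem taylorSeries_one : taylorSeries 1 = 1 := by
  ext n
  rw [taylorSeries, coeff_mk, taylorCoeff, Pi.one_def, iteratedDeriv_const, coeff_one]
  split_ifs with hn <;> simp [hn]

theorem taylorSeries_mul {f g : ℝ → ℝ} (hf : ContDiffAt ℝ ∞ f 0) (hg : ContDiffAt ℝ ∞ g 0) :
    taylorSeries (f * g) = taylorSeries f * taylorSeries g := by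
  ext n
  rw [coeff_mul, Finset.Nat.sum_antidiagonal_eq_sum_range_succ (fun i j => coeff i _ * coeff j _),
    taylorSeries, coeff_mk, taylorCoeff,
    iteratedDeriv_mul (hf.of_le (mod_cast le_top)) (hg.of_le (mod_cast le_top)), Finset.sum_div]
  refine Finset.sum_congr rfl fun i hi => ?_
  have hin : i ≤ n := Nat.lt_succ_iff.mp (Finset.mem_range.mp hi)
  simp only [taylorSeries, coeff_mk, taylorCoeff]
  rw [Nat.cast_choose ℝ hin]
  field_simp

theorem taylorSeries_pow {f : ℝ → ℝ} (hf : ContDiffAt ℝ ∞ f 0) (m : ℕ) :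
    taylorSeries (f ^ m) = taylorSeries f ^ m := by
  induction m with
  | zero => simp
  | succ m ih =>
    rw [pow_succ, taylorSeries_mul (by simpa [← Pi.pow_def] using hf.pow m) hf, ih, pow_succ]

noncomputable def negLogOneSubDiv (x : ℝ) : ℝ :=
  if x = 0 then 1 else -Real.log (1 - x) / x

theorem negLogOneSubDiv_zero : negLogOneSubDiv 0 = 1 := if_pos rfl

theorem hasFPowerSeriesOnBall_negLogOneSubDiv :
    HasFPowerSeriesOnBall negLogOneSubDiv (.ofScalars ℝ fun n => ((n : ℝ) + 1)⁻¹) 0 1 where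
  r_le := FormalMultilinearSeries.le_radius_of_bound _ 1 fun n => by
    rw [FormalMultilinearSeries.ofScalars_norm, Real.norm_of_nonneg (by positivity),
      NNReal.coe_one, one_pow, mul_one]
    exact inv_le_one_of_one_le₀ (by simp)
  r_pos := one_pos
  hasSum {y} hy := by
    simp only [FormalMultilinearSeries.ofScalars_apply_eq, smul_eq_mul, zero_add]
    rcases eq_or_ne y 0 with rfl | hy0
    · simpa [negLogOneSubDiv_zero] using
        hasSum_single (f := fun n : ℕ => ((n : ℝ) + 1)⁻¹ * 0 ^ n) 0 fun n hn => by simp [hn]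
    · have hy1 : |y| < 1 := by simpa [edist_dist, ENNReal.ofReal_lt_one] using hy
      have hterms : (fun n : ℕ => ((n : ℝ) + 1)⁻¹ * y ^ n) =
          fun n : ℕ => y ^ (n + 1) / ((n : ℝ) + 1) / y := by
        ext n
        field_simp
        ring
      rw [negLogOneSubDiv, if_neg hy0, hterms]
      exact (Real.hasSum_pow_div_log_of_abs_lt_one hy1).div_const y

theorem taylorSeries_negLogOneSubDiv : taylorSeries negLogOneSubDiv = negLogOneSubDivSeries ℝ := by
  ext n
  rw [taylorSeries, coeff_mk, taylorCoeff_eq_of_hasFPowerSeriesAt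
    hasFPowerSeriesOnBall_negLogOneSubDiv.hasFPowerSeriesAt, negLogOneSubDivSeries, coeff_mk]

theorem gregoryGenNeg_eq_inv : gregoryGenNeg = negLogOneSubDiv⁻¹ := by
  funext x
  by_cases hx : x = 0 <;> simp [gregoryGenNeg, negLogOneSubDiv, hx]

theorem analyticAt_negLogOneSubDiv : AnalyticAt ℝ negLogOneSubDiv 0 :=
  hasFPowerSeriesOnBall_negLogOneSubDiv.analyticAt

theorem analyticAt_gregoryGenNeg : AnalyticAt ℝ gregoryGenNeg 0 :=
  gregoryGenNeg_eq_inv ▸ analyticAt_negLogOneSubDiv.inv (by simp [negLogOneSubDiv_zero])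

theorem taylorSeries_gregoryGenNeg_mul :
    taylorSeries gregoryGenNeg * negLogOneSubDivSeries ℝ = 1 := by
  rw [← taylorSeries_negLogOneSubDiv, ← taylorSeries_mul analyticAt_gregoryGenNeg.contDiffAt
    analyticAt_negLogOneSubDiv.contDiffAt, ← taylorSeries_one]
  apply taylorSeries_congr
  filter_upwards [analyticAt_negLogOneSubDiv.continuousAt.eventually_ne
    (negLogOneSubDiv_zero.trans_ne one_ne_zero)] with x hx
  simp [gregoryGenNeg_eq_inv, inv_mul_cancel₀ hx]

end Gregory

open Gregory

theorem gregory_polynomial_diagonal_identity_general (k : ℕ) :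
    ((k : ℝ) - 1) * taylorCoeff k (fun x => gregoryGenNeg x ^ k) =
      -taylorCoeff k (fun x => gregoryGenNeg x ^ (k - 1)) := by
  have h := sub_one_mul_coeff_pow_eq_neg_coeff_pow_sub_one taylorSeries_gregoryGenNeg_mul k
  rw [← taylorSeries_pow analyticAt_gregoryGenNeg.contDiffAt,
    ← taylorSeries_pow analyticAt_gregoryGenNeg.contDiffAt] at h
  simp only [taylorSeries, coeff_mk] at h
  exact h

theorem gregory_polynomial_diagonal_identity (k : ℕ) (hk : 2 ≤ k) :
    ((k : ℝ) - 1) * taylorCoeff k (fun x => gregoryGenNeg x ^ k) =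
      -taylorCoeff k (fun x => gregoryGenNeg x ^ (k - 1)) :=
  gregory_polynomial_diagonal_identity_general k
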